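/- Let H be an imprimitive permutation group on a finite set Ω and let Δ ⊆ Ω be a minimal block of imprimitivity of H. Suppose that the induced group H^Δ_Δ is a relation group on Δ that has at least |Ω|/|Δ| regular sets on Δ of pairwise distinct cardinalities. Then every subgroup of H is a relation group on Ω. -/

import Mathlib

open Pointwise MulAction

/-- The invariance group `G(R)` of an unordered relation `R` on `Ω`:
all permutations `g` such that `x ∈ R` implies `g • x ∈ R`. -/
def invGroup {Ω : Type*} [Fintype Ω] [DecidableEq Ω] (R : Set (Finset Ω)) :
    Subgroup (Equiv.Perm Ω) where
  carrier := {g | ∀ x ∈ R, g • x ∈ R}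
  one_mem' := fun x hx => by simpa using hx
  mul_mem' := fun ha hb x hx => by rw [mul_smul]; exact ha _ (hb _ hx)
  inv_mem' := by
    intro g hg x hx
    have himg : (fun y : Finset _ => g • y) '' R ⊆ R := by
      rintro - ⟨y, hy, rfl⟩; exact hg y hy
    have heq : (fun y : Finset _ => g • y) '' R = R := by
      apply Set.eq_of_subset_of_ncard_le himg _ (Set.toFinite R)
      rw [Set.ncard_image_of_injective _ (MulAction.injective g)]
    rw [← heq] at hx
    obtain ⟨y, hy, hxy⟩ := hx
    have : g⁻¹ • x = y := by rw [← hxy]; simp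
    rwa [this]

/-- A permutation group on `Ω` is a relation group if it is the invariance group
of some unordered relation on `Ω`. -/
def IsRelationGroup {Ω : Type*} [Fintype Ω] [DecidableEq Ω]
    (G : Subgroup (Equiv.Perm Ω)) : Prop :=
  ∃ R : Set (Finset Ω), G = invGroup R

/-- `w` is a regular set for `G`: only the identity of `G` stabilizes `w` setwise. -/
def IsRegularSet {Ω : Type*} [DecidableEq Ω] (G : Subgroup (Equiv.Perm Ω))
    (w : Finset Ω) : Prop :=
  ∀ g ∈ G, g • w = w → g = 1

/-- The arity of a relation: the set of cardinalities of its members. -/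
def arity {Ω : Type*} (R : Set (Finset Ω)) : Set ℕ := {n | ∃ x ∈ R, x.card = n}

/-- `G` is orbit closed: every permutation mapping each finite subset into its
`G`-orbit already lies in `G`. -/
def IsOrbitClosed {Ω : Type*} [DecidableEq Ω] (G : Subgroup (Equiv.Perm Ω)) : Prop :=
  ∀ g : Equiv.Perm Ω, (∀ x : Finset Ω, ∃ h ∈ G, g • x = h • x) → g ∈ G

/-- `G` is set-transitive: transitive on `k`-element subsets for every `k`. -/
def IsSetTransitive {Ω : Type*} [DecidableEq Ω] (G : Subgroup (Equiv.Perm Ω)) : Prop :=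
  ∀ x y : Finset Ω, x.card = y.card → ∃ g ∈ G, g • x = y

/-- A permutation group is primitive if it is transitive and every block of the
action is trivial (a subsingleton or the whole set). -/
def IsPrimitivePermGroup {Ω : Type*} (G : Subgroup (Equiv.Perm Ω)) : Prop :=
  MulAction.IsPretransitive ↥G Ω ∧
    ∀ B : Set Ω, MulAction.IsBlock ↥G B → B.Subsingleton ∨ B = Set.univ

/-- Restriction of the setwise stabilizer of a finite set `Δ` to a permutation group on `Δ`. -/
def restrictHom {Ω : Type*} [DecidableEq Ω] (Δ : Finset Ω) :
    ↥(MulAction.stabilizer (Equiv.Perm Ω) Δ) →* Equiv.Perm {x // x ∈ Δ} where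
  toFun h := Equiv.Perm.subtypePerm h.1 (fun x => by
    symm
    constructor
    · intro hx
      have := Finset.smul_mem_smul_finset (a := h.1) hx
      rwa [h.2] at this
    · intro hx
      have h2 : h.1 • x ∈ h.1 • Δ := by rw [h.2]; exact hx
      exact (Finset.smul_mem_smul_finset_iff h.1).mp h2)
  map_one' := rfl
  map_mul' _ _ := rfl

/-- The group `H^Δ_Δ` induced on `Δ` by the setwise stabilizer of `Δ` in `H`. -/
def inducedGroup {Ω : Type*} [DecidableEq Ω] (H : Subgroup (Equiv.Perm Ω)) (Δ : Finset Ω) :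
    Subgroup (Equiv.Perm {x // x ∈ Δ}) :=
  Subgroup.map (restrictHom Δ)
    ((H ⊓ MulAction.stabilizer (Equiv.Perm Ω) Δ).subgroupOf
      (MulAction.stabilizer (Equiv.Perm Ω) Δ))

/-!
Let `S` be a relation on `Δ` whose invariance group is `H^Δ_Δ`. The `H`-translates of the
members of `S` smaller than `Δ` form a relation `L` whose connected components are exactly the
blocks: by minimality of `Δ`, since `S` must have a member with at least two points (otherwise
`H^Δ_Δ = Sym(Δ)`, which has regular sets of at most one size). Hence every permutation preserving
`L` permutes the blocks, and on each block that it fixes it acts, after conjugation to `Δ`, as an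
element of `H^Δ_Δ`. Put a translate of a different regular set into each block; the union `W`
meets the blocks in sets of pairwise distinct sizes, so a permutation preserving `L` and `W`
fixes every block, and then every point by regularity. Adding to `L` the `G`-orbit of `W` or of
its complement, whichever is not smaller than `Δ`, gives a relation whose invariance group is `G`.
-/

section InvGroup

variable {Ω : Type*} [Fintype Ω] [DecidableEq Ω]

theorem le_invGroup_orbit (G : Subgroup (Equiv.Perm Ω)) (V : Finset Ω) :
    G ≤ invGroup (orbit G V) := by
  rintro g hg _ ⟨g', rfl⟩
  exact ⟨⟨g, hg⟩ * g', mul_smul _ _ _⟩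

theorem invGroup_union_le_left {A B : Set (Finset Ω)}
    (hAB : ∀ a ∈ A, ∀ b ∈ B, a.card ≠ b.card) : invGroup (A ∪ B) ≤ invGroup A := by
  intro g hg x hx
  exact (hg x (Or.inl hx)).resolve_right fun hgx =>
    hAB x hx _ hgx (Finset.card_smul_finset g x).symm

theorem eq_invGroup_union_orbit {G : Subgroup (Equiv.Perm Ω)} {L : Set (Finset Ω)}
    {V : Finset Ω} (hGL : G ≤ invGroup L) (hL : ∀ x ∈ L, x.card ≠ V.card)
    (hstab : invGroup L ⊓ stabilizer (Equiv.Perm Ω) V ≤ G) :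
    G = invGroup (L ∪ orbit G V) := by
  have hcard : ∀ x ∈ L, ∀ y ∈ orbit G V, x.card ≠ y.card := by
    rintro x hx _ ⟨g, rfl⟩
    simpa only [Subgroup.smul_def, Finset.card_smul_finset] using hL x hx
  refine le_antisymm (fun g hg x hx => ?_) (fun f hf => ?_)
  · rcases hx with hx | hx
    · exact Or.inl (hGL hg x hx)
    · exact Or.inr (le_invGroup_orbit G V hg x hx)
  · obtain ⟨g, hg⟩ : f • V ∈ orbit G V :=
      (hf V (Or.inr (mem_orbit_self V))).resolve_left fun hfV =>
        hcard _ hfV V (mem_orbit_self V) (Finset.card_smul_finset f V)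
    change (g : Equiv.Perm Ω) • V = f • V at hg
    have hgf : (g : Equiv.Perm Ω)⁻¹ * f ∈ G := hstab <| Subgroup.mem_inf.mpr
      ⟨mul_mem (inv_mem (hGL g.2)) (invGroup_union_le_left hcard hf), by
        rw [mem_stabilizer_iff, mul_smul, ← hg, inv_smul_smul]⟩
    simpa using mul_mem g.2 hgf

end InvGroup

theorem swap_smul_finset_eq {α : Type*} [DecidableEq α] {s : Finset α} {x y : α}
    (h : x ∈ s ↔ y ∈ s) : Equiv.swap x y • s = s := by
  ext z
  rw [← Finset.inv_smul_mem_iff, Equiv.swap_inv, Equiv.Perm.smul_def, Equiv.swap_apply_def]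
  split_ifs with hzx hzy
  · rw [hzx, h]
  · rw [hzy, h]
  · rfl

section Symmetric

variable {α : Type*} [Fintype α] [DecidableEq α]

theorem IsRegularSet.card_eq_one_of_top {w : Finset α} (hw : IsRegularSet ⊤ w)
    (hα : 1 < Fintype.card α) : w.card = 1 := by
  have hswap : ∀ x y, (x ∈ w ↔ y ∈ w) → x = y := fun x y h =>
    Equiv.swap_eq_one_iff.mp (hw _ trivial (swap_smul_finset_eq h))
  have hw₁ : w.card ≤ 1 := Finset.card_le_one.mpr fun x hx y hy => hswap x y (by simp [hx, hy])
  have hw₂ : wᶜ.card ≤ 1 := Finset.card_le_one.mpr fun x hx y hy =>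
    hswap x y (by simp_all)
  have := Finset.card_add_card_compl w
  omega

theorem invGroup_eq_top_of_isPretransitive {S : Set (Finset α)}
    [IsPretransitive (invGroup S) α] (hS : ∀ s ∈ S, s.card ≤ 1 ∨ Fintype.card α ≤ s.card) :
    invGroup S = ⊤ := by
  refine eq_top_iff.mpr fun π _ s hs => ?_
  rcases hS s hs with hs₁ | hsα
  · rcases Nat.le_one_iff_eq_zero_or_eq_one.mp hs₁ with hs₀ | hs₁
    · rwa [Finset.card_eq_zero.mp hs₀] at hs ⊢
    · obtain ⟨a, rfl⟩ := Finset.card_eq_one.mp hs₁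
      obtain ⟨k, hk⟩ := exists_smul_eq (invGroup S) a (π a)
      have := k.2 _ hs
      rwa [Finset.smul_finset_singleton, ← Subgroup.smul_def, hk] at this
  · rw [Finset.eq_univ_of_card s (le_antisymm (Finset.card_le_univ s) hsα)] at hs ⊢
    rwa [Finset.smul_finset_univ]

theorem exists_mem_one_lt_card_lt {S : Set (Finset α)} [IsPretransitive (invGroup S) α]
    (hα : 1 < Fintype.card α) {w₁ w₂ : Finset α} (hw₁ : IsRegularSet (invGroup S) w₁)
    (hw₂ : IsRegularSet (invGroup S) w₂) (hne : w₁.card ≠ w₂.card) :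
    ∃ s ∈ S, 1 < s.card ∧ s.card < Fintype.card α := by
  by_contra! h
  have htop := invGroup_eq_top_of_isPretransitive fun s hs =>
    (le_or_gt s.card 1).imp_right (h s hs)
  rw [htop] at hw₁ hw₂
  exact hne ((hw₁.card_eq_one_of_top hα).trans (hw₂.card_eq_one_of_top hα).symm)

end Symmetric

section Blocks

variable {Ω : Type*} [Fintype Ω] [DecidableEq Ω] {H : Subgroup (Equiv.Perm Ω)} {Δ : Finset Ω}

open Classical in
noncomputable def blocks (H : Subgroup (Equiv.Perm Ω)) (Δ : Finset Ω) : Finset (Finset Ω) :=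
  (Finset.univ.filter (· ∈ H)).image (· • Δ)

theorem mem_blocks {b : Finset Ω} : b ∈ blocks H Δ ↔ ∃ h ∈ H, h • Δ = b := by
  simp [blocks]

theorem self_mem_blocks : Δ ∈ blocks H Δ :=
  mem_blocks.mpr ⟨1, one_mem H, one_smul _ Δ⟩

theorem card_of_mem_blocks {b : Finset Ω} (hb : b ∈ blocks H Δ) : b.card = Δ.card := by
  obtain ⟨h, -, rfl⟩ := mem_blocks.mp hb
  exact Finset.card_smul_finset h Δ

theorem exists_mem_blocks [IsPretransitive H Ω] (hΔ : Δ.Nonempty) (x : Ω) :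
    ∃ b ∈ blocks H Δ, x ∈ b := by
  obtain ⟨δ, hδ⟩ := hΔ
  obtain ⟨h, rfl⟩ := exists_smul_eq H δ x
  exact ⟨_, mem_blocks.mpr ⟨h, h.2, rfl⟩, Finset.smul_mem_smul_finset hδ⟩

theorem MulAction.IsBlock.eq_of_mem_blocks (hblock : IsBlock H (Δ : Set Ω))
    {b b' : Finset Ω} (hb : b ∈ blocks H Δ) (hb' : b' ∈ blocks H Δ) {x : Ω} (hx : x ∈ b)
    (hx' : x ∈ b') : b = b' := by
  obtain ⟨h, hh, rfl⟩ := mem_blocks.mp hb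
  obtain ⟨h', hh', rfl⟩ := mem_blocks.mp hb'
  have := hblock.smul_eq_smul_of_nonempty (g₁ := (⟨h, hh⟩ : H)) (g₂ := ⟨h', hh'⟩)
    ⟨x, by simpa [Subgroup.smul_def, ← Finset.coe_smul_finset] using And.intro hx hx'⟩
  simpa [Subgroup.smul_def, ← Finset.coe_smul_finset] using this

theorem card_blocks_mul_card [IsPretransitive H Ω] (hblock : IsBlock H (Δ : Set Ω))
    (hΔ : Δ.Nonempty) : (blocks H Δ).card * Δ.card = Fintype.card Ω := by
  have hcover : (blocks H Δ).biUnion id = Finset.univ :=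
    Finset.eq_univ_of_forall fun x => by simpa using exists_mem_blocks hΔ x
  rw [← Finset.card_univ, ← hcover, Finset.card_biUnion,
    Finset.sum_const_nat fun b hb => (card_of_mem_blocks hb : (id b).card = Δ.card)]
  intro b hb b' hb' hne
  exact Finset.disjoint_left.mpr fun x hx hx' => hne (hblock.eq_of_mem_blocks hb hb' hx hx')

end Blocks

section Components

variable {Ω : Type*} [Fintype Ω] {L : Set (Finset Ω)}

def Linked (L : Set (Finset Ω)) (x y : Ω) : Prop := ∃ r ∈ L, x ∈ r ∧ y ∈ r

instance : Std.Symm (Linked L) where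
  symm _ _ := fun ⟨r, hr, hx, hy⟩ => ⟨r, hr, hy, hx⟩

open Classical in
noncomputable def component (L : Set (Finset Ω)) (x : Ω) : Finset Ω :=
  Finset.univ.filter (Relation.ReflTransGen (Linked L) x)

theorem mem_component {x y : Ω} :
    y ∈ component L x ↔ Relation.ReflTransGen (Linked L) x y := by
  simp [component]

theorem component_eq_of_mem {x y : Ω} (h : y ∈ component L x) :
    component L y = component L x := by
  ext z
  simp only [mem_component] at h ⊢
  exact ⟨h.trans, (symm h).trans⟩

theorem Relation.ReflTransGen.linked_smul [DecidableEq Ω] {g : Equiv.Perm Ω}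
    (hg : g ∈ invGroup L) {x y : Ω} (h : Relation.ReflTransGen (Linked L) x y) :
    Relation.ReflTransGen (Linked L) (g • x) (g • y) :=
  h.lift (g • ·) fun _ _ ⟨r, hr, hx, hy⟩ =>
    ⟨g • r, hg r hr, Finset.smul_mem_smul_finset hx, Finset.smul_mem_smul_finset hy⟩

theorem smul_component [DecidableEq Ω] {g : Equiv.Perm Ω} (hg : g ∈ invGroup L) (x : Ω) :
    g • component L x = component L (g • x) := by
  ext y
  rw [← Finset.inv_smul_mem_iff, mem_component, mem_component]
  refine ⟨fun h => by simpa using h.linked_smul hg, fun h => by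
    simpa using h.linked_smul (inv_mem hg)⟩

theorem isBlock_component [DecidableEq Ω] {H : Subgroup (Equiv.Perm Ω)} (hHL : H ≤ invGroup L)
    (x : Ω) : IsBlock H (component L x : Set Ω) := by
  rw [isBlock_iff_smul_eq_of_nonempty]
  rintro h ⟨y, hy, hy'⟩
  rw [Subgroup.smul_def, ← Finset.coe_smul_finset, smul_component (hHL h.2)] at hy ⊢
  rw [Finset.mem_coe] at hy hy'
  rw [← component_eq_of_mem hy, component_eq_of_mem hy']

end Components

section BlocksAsComponents

variable {Ω : Type*} [Fintype Ω] [DecidableEq Ω] {H : Subgroup (Equiv.Perm Ω)} {Δ : Finset Ω}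
  {L : Set (Finset Ω)}

theorem component_subset_of_mem_blocks (hblock : IsBlock H (Δ : Set Ω))
    (hLb : ∀ r ∈ L, ∃ b ∈ blocks H Δ, r ⊆ b) {b : Finset Ω} (hb : b ∈ blocks H Δ) {x : Ω}
    (hx : x ∈ b) : component L x ⊆ b := by
  intro y hy
  replace hy := mem_component.mp hy
  induction hy with
  | refl => exact hx
  | tail _ hyz hyb =>
    obtain ⟨r, hr, hyr, hzr⟩ := hyz
    obtain ⟨b', hb', hrb'⟩ := hLb r hr
    rw [hblock.eq_of_mem_blocks hb hb' hyb (hrb' hyr)]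
    exact hrb' hzr

theorem component_eq_of_mem_blocks (hblock : IsBlock H (Δ : Set Ω))
    (hmin : ∀ B : Finset Ω, IsBlock H (B : Set Ω) → B ⊆ Δ → B ≠ Δ → B.card ≤ 1)
    (hHL : H ≤ invGroup L) (hLb : ∀ r ∈ L, ∃ b ∈ blocks H Δ, r ⊆ b)
    (hr₀ : ∃ r ∈ L, r ⊆ Δ ∧ 1 < r.card) {b : Finset Ω} (hb : b ∈ blocks H Δ) {x : Ω}
    (hx : x ∈ b) : component L x = b := by
  obtain ⟨r, hr, hrΔ, hr₁⟩ := hr₀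
  obtain ⟨x₀, hx₀, y₀, hy₀, hne⟩ := Finset.one_lt_card.mp hr₁
  have hx₀Δ : component L x₀ = Δ := by
    by_contra hne'
    have h₁ := hmin _ (isBlock_component hHL x₀)
      (component_subset_of_mem_blocks hblock hLb self_mem_blocks (hrΔ hx₀)) hne'
    have h₂ : 1 < (component L x₀).card := Finset.one_lt_card.mpr
      ⟨x₀, mem_component.mpr .refl, y₀, mem_component.mpr (.single ⟨r, hr, hx₀, hy₀⟩), hne⟩
    omega
  obtain ⟨h, hh, rfl⟩ := mem_blocks.mp hb
  obtain ⟨δ, hδ, rfl⟩ := Finset.mem_smul_finset.mp hx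
  rw [← smul_component (hHL hh), component_eq_of_mem (hx₀Δ ▸ hδ), hx₀Δ]

theorem smul_mem_blocks_of_mem_invGroup [IsPretransitive H Ω] (hblock : IsBlock H (Δ : Set Ω))
    (hmin : ∀ B : Finset Ω, IsBlock H (B : Set Ω) → B ⊆ Δ → B ≠ Δ → B.card ≤ 1)
    (hHL : H ≤ invGroup L) (hLb : ∀ r ∈ L, ∃ b ∈ blocks H Δ, r ⊆ b)
    (hr₀ : ∃ r ∈ L, r ⊆ Δ ∧ 1 < r.card) {g : Equiv.Perm Ω} (hg : g ∈ invGroup L)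
    {b : Finset Ω} (hb : b ∈ blocks H Δ) : g • b ∈ blocks H Δ := by
  have hΔ : Δ.Nonempty := by
    obtain ⟨r, -, hrΔ, hr₁⟩ := hr₀
    exact (Finset.card_pos.mp (by omega)).mono hrΔ
  obtain ⟨x, hx⟩ := Finset.card_pos.mp ((card_of_mem_blocks hb).symm ▸ hΔ.card_pos)
  obtain ⟨b', hb', hgx⟩ := exists_mem_blocks (H := H) hΔ (g • x)
  rwa [← component_eq_of_mem_blocks hblock hmin hHL hLb hr₀ hb hx, smul_component hg,
    component_eq_of_mem_blocks hblock hmin hHL hLb hr₀ hb' hgx]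

end BlocksAsComponents

section Induced

variable {Ω : Type*} {Δ : Finset Ω}

def liftFinset (Δ : Finset Ω) (s : Finset Δ) : Finset Ω :=
  s.map (Function.Embedding.subtype (· ∈ Δ))

theorem card_liftFinset (s : Finset Δ) : (liftFinset Δ s).card = s.card :=
  Finset.card_map _

theorem liftFinset_subset (s : Finset Δ) : liftFinset Δ s ⊆ Δ := by
  intro x hx
  obtain ⟨y, -, rfl⟩ := Finset.mem_map.mp hx
  exact y.2

theorem liftFinset_injective : Function.Injective (liftFinset Δ) :=
  Finset.map_injective _

variable [DecidableEq Ω]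

theorem smul_liftFinset (ψ : stabilizer (Equiv.Perm Ω) Δ) (s : Finset Δ) :
    (ψ : Equiv.Perm Ω) • liftFinset Δ s = liftFinset Δ (restrictHom Δ ψ • s) := by
  simp only [liftFinset, Finset.smul_finset_def, Finset.map_eq_image, Finset.image_image]
  rfl

theorem restrictHom_mem_inducedGroup {H : Subgroup (Equiv.Perm Ω)} {h : Equiv.Perm Ω}
    (hh : h ∈ H) (hΔ : h ∈ stabilizer (Equiv.Perm Ω) Δ) :
    restrictHom Δ ⟨h, hΔ⟩ ∈ inducedGroup H Δ :=
  Subgroup.mem_map.mpr ⟨⟨h, hΔ⟩, Subgroup.mem_subgroupOf.mpr ⟨hh, hΔ⟩, rfl⟩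

theorem isPretransitive_inducedGroup [Fintype Ω] {H : Subgroup (Equiv.Perm Ω)}
    [IsPretransitive H Ω] (hblock : IsBlock H (Δ : Set Ω)) :
    IsPretransitive (inducedGroup H Δ) Δ := by
  refine ⟨fun a b => ?_⟩
  obtain ⟨g, hg⟩ := exists_smul_eq H (a : Ω) b
  have hgΔ : (g : Equiv.Perm Ω) • Δ = Δ :=
    hblock.eq_of_mem_blocks (mem_blocks.mpr ⟨g, g.2, rfl⟩) self_mem_blocks
      (hg ▸ Finset.smul_mem_smul_finset a.2) b.2
  exact ⟨⟨_, restrictHom_mem_inducedGroup g.2 hgΔ⟩, Subtype.ext hg⟩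

theorem IsRegularSet.fixes_of_smul_liftFinset_eq {K : Subgroup (Equiv.Perm Δ)} {w : Finset Δ}
    (hw : IsRegularSet K w) {ψ : Equiv.Perm Ω} (hψΔ : ψ ∈ stabilizer (Equiv.Perm Ω) Δ)
    (hψK : restrictHom Δ ⟨ψ, hψΔ⟩ ∈ K) (hψw : ψ • liftFinset Δ w = liftFinset Δ w) {x : Ω}
    (hx : x ∈ Δ) : ψ x = x := by
  have hψ₁ := hw _ hψK (liftFinset_injective (by rw [← smul_liftFinset]; exact hψw))
  exact congrArg (fun σ : Equiv.Perm Δ => (σ ⟨x, hx⟩ : Ω)) hψ₁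

end Induced

section LiftedRelation

variable {Ω : Type*} [DecidableEq Ω] {H : Subgroup (Equiv.Perm Ω)} {Δ : Finset Ω}
  {S : Set (Finset Δ)}

-- Members of size `|Δ|` are left out so that this relation is separated by size from the orbit
-- of any set of at least `|Δ|` points.
def liftRel (H : Subgroup (Equiv.Perm Ω)) (Δ : Finset Ω) (S : Set (Finset Δ)) :
    Set (Finset Ω) :=
  {x | ∃ h ∈ H, ∃ s ∈ S, s.card < Δ.card ∧ h • liftFinset Δ s = x}

theorem liftFinset_mem_liftRel {s : Finset Δ} (hs : s ∈ S) (hsΔ : s.card < Δ.card) :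
    liftFinset Δ s ∈ liftRel H Δ S :=
  ⟨1, one_mem H, s, hs, hsΔ, one_smul _ _⟩

theorem card_lt_of_mem_liftRel {x : Finset Ω} (hx : x ∈ liftRel H Δ S) : x.card < Δ.card := by
  obtain ⟨h, -, s, -, hsΔ, rfl⟩ := hx
  rwa [Finset.card_smul_finset, card_liftFinset]

theorem exists_mem_blocks_superset_of_mem_liftRel [Fintype Ω] {x : Finset Ω}
    (hx : x ∈ liftRel H Δ S) : ∃ b ∈ blocks H Δ, x ⊆ b := by
  obtain ⟨h, hh, s, -, -, rfl⟩ := hx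
  exact ⟨h • Δ, mem_blocks.mpr ⟨h, hh, rfl⟩,
    Finset.smul_finset_subset_smul_finset (liftFinset_subset s)⟩

theorem le_invGroup_liftRel [Fintype Ω] : H ≤ invGroup (liftRel H Δ S) := by
  rintro g hg _ ⟨h, hh, s, hs, hsΔ, rfl⟩
  exact ⟨g * h, mul_mem hg hh, s, hs, hsΔ, mul_smul g h _⟩

theorem restrictHom_mem_inducedGroup_of_mem_invGroup [Fintype Ω] (hblock : IsBlock H (Δ : Set Ω))
    (hS : inducedGroup H Δ = invGroup S) {ψ : Equiv.Perm Ω} (hψ : ψ ∈ invGroup (liftRel H Δ S))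
    (hψΔ : ψ ∈ stabilizer (Equiv.Perm Ω) Δ) : restrictHom Δ ⟨ψ, hψΔ⟩ ∈ inducedGroup H Δ := by
  rw [hS]
  intro s hs
  rcases (Finset.card_le_univ s).lt_or_eq with hsΔ | hsΔ
  · rw [Fintype.card_coe] at hsΔ
    rcases s.eq_empty_or_nonempty with rfl | ⟨δ, hδ⟩
    · simpa using hs
    obtain ⟨h, hh, s', hs', -, hx⟩ := hψ _ (liftFinset_mem_liftRel hs hsΔ)
    have hψδ : ψ • (δ : Ω) ∈ ψ • liftFinset Δ s :=
      Finset.smul_mem_smul_finset (Finset.mem_map_of_mem _ hδ)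
    have hhΔ : h ∈ stabilizer (Equiv.Perm Ω) Δ :=
      hblock.eq_of_mem_blocks (mem_blocks.mpr ⟨h, hh, rfl⟩) self_mem_blocks
        (Finset.smul_finset_subset_smul_finset (liftFinset_subset s') (hx ▸ hψδ))
        ((mem_stabilizer_iff.mp hψΔ).subset (Finset.smul_mem_smul_finset δ.2))
    have hs'' := (hS ▸ restrictHom_mem_inducedGroup hh hhΔ) s' hs'
    convert hs'' using 1
    apply liftFinset_injective
    rw [← smul_liftFinset, ← smul_liftFinset]
    exact hx.symm
  · rw [Finset.eq_univ_of_card s hsΔ] at hs ⊢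
    rwa [Finset.smul_finset_univ]

end LiftedRelation

section CodingSet

variable {Ω : Type*} [Fintype Ω] [DecidableEq Ω] {H : Subgroup (Equiv.Perm Ω)} {Δ : Finset Ω}

def IsCodingSet (H : Subgroup (Equiv.Perm Ω)) (Δ : Finset Ω) (W : Finset Ω) : Prop :=
  (∀ b ∈ blocks H Δ, ∃ h ∈ H, h • Δ = b ∧
    ∃ v, IsRegularSet (inducedGroup H Δ) v ∧ h • liftFinset Δ v = W ∩ b) ∧
  Set.InjOn (fun b => (W ∩ b).card) (blocks H Δ)

theorem exists_isCodingSet (hblock : IsBlock H (Δ : Set Ω)) {m : ℕ} (w : Fin m → Finset Δ)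
    (hw : ∀ i, IsRegularSet (inducedGroup H Δ) (w i))
    (hwinj : Function.Injective fun i => (w i).card) (hm : (blocks H Δ).card ≤ m) :
    ∃ W, IsCodingSet H Δ W := by
  obtain ⟨σ⟩ : Nonempty (blocks H Δ ↪ Fin m) :=
    Function.Embedding.nonempty_of_card_le (by simpa using hm)
  choose rep hrepH hrep using fun b : blocks H Δ => mem_blocks.mp b.2
  let piece (b : blocks H Δ) : Finset Ω := rep b • liftFinset Δ (w (σ b))
  have hpiece_subset (b : blocks H Δ) : piece b ⊆ b :=
    hrep b ▸ Finset.smul_finset_subset_smul_finset (liftFinset_subset _)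
  let W := Finset.univ.biUnion piece
  have hW (b : blocks H Δ) : W ∩ b = piece b := by
    ext x
    simp only [W, Finset.mem_inter, Finset.mem_biUnion, Finset.mem_univ, true_and]
    refine ⟨fun ⟨⟨b', hx'⟩, hx⟩ => ?_, fun hx => ⟨⟨b, hx⟩, hpiece_subset b hx⟩⟩
    rwa [Subtype.ext (hblock.eq_of_mem_blocks b'.2 b.2 (hpiece_subset b' hx') hx)] at hx'
  refine ⟨W, fun b hb => ⟨rep ⟨b, hb⟩, hrepH _, hrep _, _, hw _, (hW ⟨b, hb⟩).symm⟩, ?_⟩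
  intro b hb b' hb' hcard
  have hcard' : (w (σ ⟨b, hb⟩)).card = (w (σ ⟨b', hb'⟩)).card := by
    simpa only [hW ⟨b, hb⟩, hW ⟨b', hb'⟩, piece, Finset.card_smul_finset, card_liftFinset]
      using hcard
  exact congrArg Subtype.val (σ.injective (hwinj hcard'))

theorem IsCodingSet.eq_one [IsPretransitive H Ω] {S : Set (Finset Δ)}
    (hblock : IsBlock H (Δ : Set Ω))
    (hmin : ∀ B : Finset Ω, IsBlock H (B : Set Ω) → B ⊆ Δ → B ≠ Δ → B.card ≤ 1)
    (hS : inducedGroup H Δ = invGroup S) (hs₀ : ∃ s ∈ S, 1 < s.card ∧ s.card < Δ.card)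
    {W : Finset Ω} (hW : IsCodingSet H Δ W) {e : Equiv.Perm Ω}
    (he : e ∈ invGroup (liftRel H Δ S)) (heW : e • W = W) : e = 1 := by
  obtain ⟨s₀, hs₀S, hs₀₁, hs₀Δ⟩ := hs₀
  have hΔ : Δ.Nonempty := Finset.card_pos.mp (by omega)
  have hfix : ∀ b ∈ blocks H Δ, e • b = b := by
    intro b hb
    have heb := smul_mem_blocks_of_mem_invGroup hblock hmin le_invGroup_liftRel
      (fun _ => exists_mem_blocks_superset_of_mem_liftRel)
      ⟨_, liftFinset_mem_liftRel hs₀S hs₀Δ, liftFinset_subset s₀, by rwa [card_liftFinset]⟩ he hb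
    refine hW.2 heb hb (show (W ∩ e • b).card = (W ∩ b).card from ?_)
    rw [← Finset.card_smul_finset e (W ∩ b), Finset.smul_finset_inter, heW]
  ext x
  obtain ⟨_, hb, hx⟩ := exists_mem_blocks (H := H) hΔ x
  obtain ⟨h, hh, rfl, v, hv, hhv⟩ := hW.1 _ hb
  obtain ⟨δ, hδ, rfl⟩ := Finset.mem_smul_finset.mp hx
  have hψΔ : h⁻¹ * e * h ∈ stabilizer (Equiv.Perm Ω) Δ := by
    rw [mem_stabilizer_iff, mul_smul, mul_smul, hfix _ hb, inv_smul_smul]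
  have hψ : h⁻¹ * e * h ∈ invGroup (liftRel H Δ S) :=
    mul_mem (mul_mem (le_invGroup_liftRel (inv_mem hh)) he) (le_invGroup_liftRel hh)
  have hψv : (h⁻¹ * e * h) • liftFinset Δ v = liftFinset Δ v := by
    rw [mul_smul, mul_smul, hhv, Finset.smul_finset_inter, heW, hfix _ hb, ← hhv, inv_smul_smul]
  have hδ' := hv.fixes_of_smul_liftFinset_eq hψΔ
    (restrictHom_mem_inducedGroup_of_mem_invGroup hblock hS hψ hψΔ) hψv hδ
  simpa [Equiv.Perm.mul_apply] using congrArg h hδ'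

end CodingSet

theorem Finset.smul_finset_compl {G α : Type*} [Group G] [MulAction G α] [Fintype α]
    [DecidableEq α] (g : G) (s : Finset α) : g • sᶜ = (g • s)ᶜ :=
  Finset.coe_injective <| by simp [Finset.coe_smul_finset, Set.smul_set_compl]

theorem exists_le_card_stabilizer_eq {Ω : Type*} [Fintype Ω] [DecidableEq Ω] (W : Finset Ω)
    {k : ℕ} (hk : 2 * k ≤ Fintype.card Ω) :
    ∃ V : Finset Ω, k ≤ V.card ∧ stabilizer (Equiv.Perm Ω) V = stabilizer (Equiv.Perm Ω) W := by
  by_cases hW : k ≤ W.card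
  · exact ⟨W, hW, rfl⟩
  · refine ⟨Wᶜ, by rw [Finset.card_compl]; omega, ?_⟩
    ext g
    simp [mem_stabilizer_iff, Finset.smul_finset_compl]

theorem subgroups_isRelationGroup_of_block_general {Ω : Type*} [Fintype Ω] [DecidableEq Ω]
    (H : Subgroup (Equiv.Perm Ω))
    (htrans : MulAction.IsPretransitive ↥H Ω)
    (Δ : Finset Ω) (hblock : MulAction.IsBlock ↥H (↑Δ : Set Ω))
    (h1 : 1 < Δ.card) (h2 : Δ.card < Fintype.card Ω)
    (hmin : ∀ B : Finset Ω, MulAction.IsBlock ↥H (↑B : Set Ω) → B ⊆ Δ → B ≠ Δ →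
      B.card ≤ 1)
    (hrel : IsRelationGroup (inducedGroup H Δ))
    (hregs : ∃ w : Fin (Fintype.card Ω / Δ.card) → Finset {x // x ∈ Δ},
      (∀ i, IsRegularSet (inducedGroup H Δ) (w i)) ∧
      Function.Injective fun i => (w i).card)
    (G : Subgroup (Equiv.Perm Ω)) (hG : G ≤ H) :
    IsRelationGroup G := by
  obtain ⟨S, hS⟩ := hrel
  obtain ⟨w, hw, hwinj⟩ := hregs
  have hcard := card_blocks_mul_card hblock (Finset.card_pos.mp (by omega))
  have hm : 2 ≤ (blocks H Δ).card := by
    by_contra! h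
    interval_cases (blocks H Δ).card <;> omega
  have hmΔ : Fintype.card Ω / Δ.card = (blocks H Δ).card := by
    rw [← hcard, Nat.mul_div_cancel _ (by omega)]
  have : IsPretransitive (invGroup S) Δ := hS ▸ isPretransitive_inducedGroup hblock
  obtain ⟨s₀, hs₀⟩ := exists_mem_one_lt_card_lt (S := S) (by rwa [Fintype.card_coe])
    (hS ▸ hw ⟨0, by omega⟩) (hS ▸ hw ⟨1, by omega⟩) (hwinj.ne (by simp [Fin.ext_iff]))
  rw [Fintype.card_coe] at hs₀
  obtain ⟨W, hW⟩ := exists_isCodingSet hblock w hw hwinj hmΔ.ge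
  obtain ⟨V, hVcard, hVW⟩ := exists_le_card_stabilizer_eq W (k := Δ.card) (by nlinarith)
  refine ⟨liftRel H Δ S ∪ orbit G V, eq_invGroup_union_orbit (hG.trans le_invGroup_liftRel)
    (fun x hx => ((card_lt_of_mem_liftRel hx).trans_le hVcard).ne) ?_⟩
  intro e he
  obtain ⟨heL, heV⟩ := Subgroup.mem_inf.mp he
  rw [hW.eq_one hblock hmin hS ⟨s₀, hs₀⟩ heL (mem_stabilizer_iff.mp (hVW ▸ heV))]
  exact one_mem G

/-- If `H` is imprimitive on `Ω` with a minimal block of imprimitivity `Δ` and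
the induced group `H^Δ_Δ` is a relation group on `Δ` having at least
`|Ω| / |Δ|` regular sets of pairwise distinct cardinalities, then every
subgroup of `H` is a relation group on `Ω`. -/
theorem subgroups_isRelationGroup_of_block {Ω : Type*} [Fintype Ω] [DecidableEq Ω]
    (H : Subgroup (Equiv.Perm Ω))
    (htrans : MulAction.IsPretransitive ↥H Ω) (himpr : ¬ IsPrimitivePermGroup H)
    (Δ : Finset Ω) (hblock : MulAction.IsBlock ↥H (↑Δ : Set Ω))
    (h1 : 1 < Δ.card) (h2 : Δ.card < Fintype.card Ω)
    (hmin : ∀ B : Finset Ω, MulAction.IsBlock ↥H (↑B : Set Ω) → B ⊆ Δ → B ≠ Δ →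
      B.card ≤ 1)
    (hrel : IsRelationGroup (inducedGroup H Δ))
    (hregs : ∃ w : Fin (Fintype.card Ω / Δ.card) → Finset {x // x ∈ Δ},
      (∀ i, IsRegularSet (inducedGroup H Δ) (w i)) ∧
      Function.Injective fun i => (w i).card)
    (G : Subgroup (Equiv.Perm Ω)) (hG : G ≤ H) :
    IsRelationGroup G :=
  subgroups_isRelationGroup_of_block_general H htrans Δ hblock h1 h2 hmin hrel hregs G hG
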